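/- arXiv:2209.05025 — 2 statements merged into one kernel-verified Lean document; each statement's English description precedes it below -/
import Mathlib

section
/- Let 0 < c_1 < c_2 and ζ_1, ζ_2 > −N. There exists a constant C > 0, depending only on d, 𝔰, N, c_1, c_2, ζ_1, ζ_2, such that for all t > 0 and x ∈ ℝ^d: ∫_0^t ∫_{ℝ^d} G_{t−s}^{(c_2,ζ_1)}(x−y) · G_s^{(c_2,ζ_2)}(y) dy ds ≤ C · G_t^{(c_1, ζ_1+ζ_2+N)}(x). -/
open MeasureTheory Real

/-- The Gaussian-type kernel
`G_t^{(c,ζ)}(x) = t^{(ζ−|𝔰|)/N} exp(−c Σ_j (|x_j|^{N/𝔰_j}/t)^{𝔰_j/(N−𝔰_j)})`. -/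
noncomputable def GK (d N : ℕ) (s : Fin d → ℕ) (c ζ t : ℝ) (x : Fin d → ℝ) : ℝ :=
  t ^ ((ζ - ∑ j, (s j : ℝ)) / (N : ℝ)) *
    Real.exp (-c * ∑ j, (|x j| ^ ((N : ℝ) / (s j : ℝ)) / t) ^ ((s j : ℝ) / ((N : ℝ) - (s j : ℝ))))

/-!
Write `G_t^{(c,ζ)}(x) = t^{(ζ-|𝔰|)/N} exp(-c Φ_t(x))` with `Φ_t(x) = Σ_j |x_j|^{r_j} / t^{r_j-1}`
and `r_j = N/(N-𝔰_j) ≥ 1`. Convexity of `u ↦ |u|^r` makes its perspective `(u, t) ↦ |u|^r / t^{r-1}`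
subadditive, so `Φ_t(x) ≤ Φ_{t-σ}(x-y) + Φ_σ(y)`. Spending `c₁` of the exponent `c₂` on this bound
leaves `exp(-(c₂-c₁) Φ)` to integrate out `y` in the factor with the smaller time `τ ≤ t/2`, which
costs a constant times `τ^{|𝔰|/N}`; the other time is comparable to `t`. The remaining powers
`σ^{ζ₂/N}` and `(t-σ)^{ζ₁/N}` are integrable on `(0, t)` because `ζ_i > -N`.
-/

lemma rpow_div_rpow_sub_one {a p τ : ℝ} (ha : 0 ≤ a) (hτ : 0 < τ) :
    a ^ p / τ ^ (p - 1) = τ * (a / τ) ^ p := by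
  rw [div_rpow ha hτ.le, rpow_sub hτ, rpow_one]
  field_simp

lemma add_rpow_div_rpow_sub_one_le {p a b τ₁ τ₂ : ℝ} (hp : 1 ≤ p) (ha : 0 ≤ a) (hb : 0 ≤ b)
    (hτ₁ : 0 < τ₁) (hτ₂ : 0 < τ₂) :
    (a + b) ^ p / (τ₁ + τ₂) ^ (p - 1) ≤ a ^ p / τ₁ ^ (p - 1) + b ^ p / τ₂ ^ (p - 1) := by
  have hτ : 0 < τ₁ + τ₂ := add_pos hτ₁ hτ₂
  have hconv := (convexOn_rpow hp).2 (Set.mem_Ici.2 (div_nonneg ha hτ₁.le))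
    (Set.mem_Ici.2 (div_nonneg hb hτ₂.le)) (div_nonneg hτ₁.le hτ.le) (div_nonneg hτ₂.le hτ.le)
    (by field_simp)
  have hmean : τ₁ / (τ₁ + τ₂) * (a / τ₁) + τ₂ / (τ₁ + τ₂) * (b / τ₂) = (a + b) / (τ₁ + τ₂) := by
    field_simp
  rw [smul_eq_mul, smul_eq_mul, hmean, smul_eq_mul, smul_eq_mul] at hconv
  rw [rpow_div_rpow_sub_one (add_nonneg ha hb) hτ, rpow_div_rpow_sub_one ha hτ₁,
    rpow_div_rpow_sub_one hb hτ₂]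
  calc (τ₁ + τ₂) * ((a + b) / (τ₁ + τ₂)) ^ p
      ≤ (τ₁ + τ₂) * (τ₁ / (τ₁ + τ₂) * (a / τ₁) ^ p + τ₂ / (τ₁ + τ₂) * (b / τ₂) ^ p) := by gcongr
    _ = τ₁ * (a / τ₁) ^ p + τ₂ * (b / τ₂) ^ p := by field_simp

lemma integrable_exp_neg_mul_abs_rpow {b p : ℝ} (hb : 0 < b) (hp : 0 < p) :
    Integrable fun u : ℝ => exp (-b * |u| ^ p) := by
  simpa [← Real.norm_eq_abs] using
    (integrable_fun_norm_addHaar volume (f := fun y => exp (-b * y ^ p))).2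
      (by simpa using integrableOn_rpow_mul_exp_neg_mul_rpow neg_one_lt_zero hp hb)

lemma integral_exp_neg_mul_abs_rpow {b p : ℝ} (hb : 0 < b) (hp : 0 < p) :
    ∫ u : ℝ, exp (-b * |u| ^ p) = 2 * (b ^ (-1 / p) * Gamma (1 / p + 1)) := by
  rw [integral_comp_abs (f := fun u => exp (-b * u ^ p)), integral_exp_neg_mul_rpow hp hb]

section Phase

variable {ι : Type*} [Fintype ι] {r : ι → ℝ} {ε τ τ₁ τ₂ : ℝ}

noncomputable def phase (r : ι → ℝ) (τ : ℝ) (z : ι → ℝ) : ℝ :=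
  ∑ j, |z j| ^ r j / τ ^ (r j - 1)

lemma phase_nonneg (hτ : 0 ≤ τ) (z : ι → ℝ) : 0 ≤ phase r τ z := by
  unfold phase; positivity

lemma phase_add_le (hr : ∀ j, 1 ≤ r j) (hτ₁ : 0 < τ₁) (hτ₂ : 0 < τ₂) (x y : ι → ℝ) :
    phase r (τ₁ + τ₂) (x + y) ≤ phase r τ₁ x + phase r τ₂ y := by
  rw [phase, phase, phase, ← Finset.sum_add_distrib]
  gcongr with j
  calc |x j + y j| ^ r j / (τ₁ + τ₂) ^ (r j - 1)
      ≤ (|x j| + |y j|) ^ r j / (τ₁ + τ₂) ^ (r j - 1) := by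
        gcongr
        · linarith [hr j]
        · exact abs_add_le _ _
    _ ≤ _ := add_rpow_div_rpow_sub_one_le (hr j) (abs_nonneg _) (abs_nonneg _) hτ₁ hτ₂

lemma exp_neg_mul_phase (ε τ : ℝ) (y : ι → ℝ) :
    exp (-ε * phase r τ y) = ∏ j, exp (-(ε / τ ^ (r j - 1)) * |y j| ^ r j) := by
  rw [phase, Finset.mul_sum, exp_sum]
  congr! 2 with j
  ring

lemma integrable_exp_neg_mul_phase (hr : ∀ j, 0 < r j) (hε : 0 < ε) (hτ : 0 < τ) :
    Integrable fun y : ι → ℝ => exp (-ε * phase r τ y) := by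
  simp_rw [exp_neg_mul_phase]
  exact Integrable.fintype_prod fun j =>
    integrable_exp_neg_mul_abs_rpow (div_pos hε (rpow_pos_of_pos hτ _)) (hr j)

noncomputable def phaseMass (r : ι → ℝ) (ε : ℝ) : ℝ :=
  ∏ j, 2 * (ε ^ (-1 / r j) * Gamma (1 / r j + 1))

lemma phaseMass_pos (hr : ∀ j, 0 < r j) (hε : 0 < ε) : 0 < phaseMass r ε :=
  Finset.prod_pos fun j _ => by
    have := hr j
    have := Gamma_pos_of_pos (by positivity : 0 < 1 / r j + 1)
    positivity

lemma integral_exp_neg_mul_phase (hr : ∀ j, 0 < r j) (hε : 0 < ε) (hτ : 0 < τ) :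
    ∫ y : ι → ℝ, exp (-ε * phase r τ y) = τ ^ (∑ j, (1 - (r j)⁻¹)) * phaseMass r ε := by
  simp_rw [exp_neg_mul_phase]
  rw [volume_pi,
    integral_fintype_prod_eq_prod (f := fun j u => exp (-(ε / τ ^ (r j - 1)) * |u| ^ r j)),
    rpow_sum_of_pos hτ, phaseMass, ← Finset.prod_mul_distrib]
  refine Finset.prod_congr rfl fun j _ => ?_
  have hrj := hr j
  rw [integral_exp_neg_mul_abs_rpow (div_pos hε (rpow_pos_of_pos hτ _)) hrj,
    div_rpow hε.le (rpow_pos_of_pos hτ _).le, ← rpow_mul hτ.le, div_eq_mul_inv, ← rpow_neg hτ.le,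
    show -((r j - 1) * (-1 / r j)) = 1 - (r j)⁻¹ by field_simp]
  ring

end Phase

lemma rpow_le_two_rpow_abs_mul_rpow {t u α : ℝ} (ht : 0 < t) (htu : t / 2 ≤ u) (hut : u ≤ t) :
    u ^ α ≤ 2 ^ |α| * t ^ α := by
  have hu : 0 < u := by linarith
  rcases le_or_gt 0 α with hα | hα
  · calc u ^ α ≤ t ^ α := by gcongr
      _ ≤ 2 ^ |α| * t ^ α :=
        le_mul_of_one_le_left (by positivity) (one_le_rpow one_le_two (abs_nonneg α))
  · calc u ^ α ≤ (t / 2) ^ α := rpow_le_rpow_of_nonpos (by positivity) htu hα.le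
      _ = 2 ^ |α| * t ^ α := by
        rw [abs_of_neg hα, div_rpow ht.le zero_le_two, rpow_neg zero_le_two]
        ring

lemma setIntegral_Ioo_le_of_le_rpow_add_rpow {f : ℝ → ℝ} {t α β A B : ℝ} (ht : 0 < t)
    (hα : -1 < α) (hβ : -1 < β) (hf : ∀ σ ∈ Set.Ioo 0 t, 0 ≤ f σ)
    (hfg : ∀ σ ∈ Set.Ioo 0 t, f σ ≤ A * σ ^ α + B * (t - σ) ^ β) :
    ∫ σ in Set.Ioo 0 t, f σ ≤ A * (t ^ (α + 1) / (α + 1)) + B * (t ^ (β + 1) / (β + 1)) := by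
  have hgα : IntervalIntegrable (fun σ => σ ^ α) volume 0 t :=
    intervalIntegral.intervalIntegrable_rpow' hα
  have hgβ : IntervalIntegrable (fun σ => (t - σ) ^ β) volume 0 t := by
    simpa using
      ((intervalIntegral.intervalIntegrable_rpow' hβ (a := 0) (b := t)).comp_sub_left t).symm
  have hg := (hgα.const_mul A).add (hgβ.const_mul B)
  calc ∫ σ in Set.Ioo 0 t, f σ ≤ ∫ σ in Set.Ioo 0 t, (A * σ ^ α + B * (t - σ) ^ β) :=
        integral_mono_of_nonneg ((ae_restrict_iff' measurableSet_Ioo).2 (ae_of_all _ hf))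
          ((intervalIntegrable_iff_integrableOn_Ioo_of_le ht.le).1 hg)
          ((ae_restrict_iff' measurableSet_Ioo).2 (ae_of_all _ hfg))
    _ = ∫ σ in (0)..t, (A * σ ^ α + B * (t - σ) ^ β) := by
        rw [intervalIntegral.integral_of_le ht.le, integral_Ioc_eq_integral_Ioo]
    _ = A * (t ^ (α + 1) / (α + 1)) + B * (t ^ (β + 1) / (β + 1)) := by
        rw [intervalIntegral.integral_add (hgα.const_mul A) (hgβ.const_mul B),
          intervalIntegral.integral_const_mul, intervalIntegral.integral_const_mul,
          intervalIntegral.integral_comp_sub_left (fun σ => σ ^ β), sub_self, sub_zero,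
          integral_rpow (Or.inl hα), integral_rpow (Or.inl hβ),
          zero_rpow (by linarith), zero_rpow (by linarith), sub_zero, sub_zero]

section Kernel

variable {d N : ℕ} {s : Fin d → ℕ}

noncomputable def kernelExponent (N : ℕ) (s : Fin d → ℕ) (j : Fin d) : ℝ := N / (N - s j)

lemma one_le_kernelExponent (hN : ∀ j, s j < N) (j : Fin d) : 1 ≤ kernelExponent N s j := by
  have hsN : (s j : ℝ) < N := by exact_mod_cast hN j
  rw [kernelExponent, one_le_div (by linarith)]
  linarith [(s j).cast_nonneg (α := ℝ)]

lemma kernelExponent_pos (hN : ∀ j, s j < N) (j : Fin d) : 0 < kernelExponent N s j :=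
  one_pos.trans_le (one_le_kernelExponent hN j)

lemma sum_one_sub_inv_kernelExponent (hN : ∀ j, s j < N) :
    ∑ j, (1 - (kernelExponent N s j)⁻¹) = (∑ j, (s j : ℝ)) / N := by
  rw [Finset.sum_div]
  refine Finset.sum_congr rfl fun j _ => ?_
  have hN0 : (N : ℝ) ≠ 0 := by exact_mod_cast ((hN j).trans_le' (Nat.zero_le _)).ne'
  rw [kernelExponent, inv_div]
  field_simp
  ring

lemma GK_eq (hs : ∀ j, 0 < s j) (hN : ∀ j, s j < N) {c ζ τ : ℝ} (hτ : 0 < τ) (z : Fin d → ℝ) :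
    GK d N s c ζ τ z =
      τ ^ ((ζ - ∑ j, (s j : ℝ)) / N) * exp (-c * phase (kernelExponent N s) τ z) := by
  rw [GK, phase]
  congr 3
  refine Finset.sum_congr rfl fun j _ => ?_
  have hs0 : (s j : ℝ) ≠ 0 := by exact_mod_cast (hs j).ne'
  have hNs : (N : ℝ) - s j ≠ 0 := sub_ne_zero.2 (by exact_mod_cast (hN j).ne')
  rw [div_rpow (by positivity) hτ.le, ← rpow_mul (abs_nonneg _), kernelExponent]
  congr 2
  · field_simp
  · field_simp
    ring

lemma GK_nonneg {c ζ τ : ℝ} (hτ : 0 ≤ τ) (z : Fin d → ℝ) : 0 ≤ GK d N s c ζ τ z := by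
  unfold GK
  positivity

lemma integral_GK_mul_GK_le (hs : ∀ j, 0 < s j) (hN : ∀ j, s j < N) {c₁ c₂ ζ₁ ζ₂ τ₁ τ₂ : ℝ}
    (hc₁ : 0 ≤ c₁) (hc : c₁ < c₂) (hτ₁ : 0 < τ₁) (hτ₂ : 0 < τ₂) (x : Fin d → ℝ) :
    ∫ y, GK d N s c₂ ζ₁ τ₁ (x - y) * GK d N s c₂ ζ₂ τ₂ y ≤
      phaseMass (kernelExponent N s) (c₂ - c₁) * τ₁ ^ ((ζ₁ - ∑ j, (s j : ℝ)) / N) *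
        τ₂ ^ (ζ₂ / N) * exp (-c₁ * phase (kernelExponent N s) (τ₁ + τ₂) x) := by
  set r := kernelExponent N s
  set S := ∑ j, (s j : ℝ)
  set E := exp (-c₁ * phase r (τ₁ + τ₂) x)
  have hr : ∀ j, 0 < r j := kernelExponent_pos hN
  have hε : 0 < c₂ - c₁ := sub_pos.2 hc
  have hpointwise : ∀ y, GK d N s c₂ ζ₁ τ₁ (x - y) * GK d N s c₂ ζ₂ τ₂ y ≤
      τ₁ ^ ((ζ₁ - S) / N) * τ₂ ^ ((ζ₂ - S) / N) * E * exp (-(c₂ - c₁) * phase r τ₂ y) := by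
    intro y
    have hsub := phase_add_le (one_le_kernelExponent hN) hτ₁ hτ₂ (x - y) y
    rw [sub_add_cancel] at hsub
    have h₁ := phase_nonneg (r := r) hτ₁.le (x - y)
    rw [GK_eq hs hN hτ₁, GK_eq hs hN hτ₂, mul_mul_mul_comm, mul_assoc _ E, ← exp_add, ← exp_add]
    gcongr ?_ * exp ?_
    nlinarith [mul_le_mul_of_nonneg_left hsub hc₁, mul_nonneg hε.le h₁]
  have hsplit : τ₂ ^ (ζ₂ / N) = τ₂ ^ ((ζ₂ - S) / N) * τ₂ ^ (S / N) := by
    rw [← rpow_add hτ₂]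
    ring_nf
  calc ∫ y, GK d N s c₂ ζ₁ τ₁ (x - y) * GK d N s c₂ ζ₂ τ₂ y
      ≤ ∫ y, τ₁ ^ ((ζ₁ - S) / N) * τ₂ ^ ((ζ₂ - S) / N) * E * exp (-(c₂ - c₁) * phase r τ₂ y) :=
        integral_mono_of_nonneg
          (ae_of_all _ fun y => mul_nonneg (GK_nonneg hτ₁.le _) (GK_nonneg hτ₂.le _))
          ((integrable_exp_neg_mul_phase hr hε hτ₂).const_mul _) (ae_of_all _ hpointwise)
    _ = phaseMass r (c₂ - c₁) * τ₁ ^ ((ζ₁ - S) / N) * τ₂ ^ (ζ₂ / N) * E := by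
        rw [integral_const_mul, integral_exp_neg_mul_phase hr hε hτ₂,
          sum_one_sub_inv_kernelExponent hN, hsplit]
        ring

lemma integral_GK_mul_GK_le_of_mem_Ioo (hs : ∀ j, 0 < s j) (hN : ∀ j, s j < N)
    {c₁ c₂ ζ₁ ζ₂ t σ : ℝ} (hc₁ : 0 ≤ c₁) (hc : c₁ < c₂) (hσ : σ ∈ Set.Ioo 0 t)
    (x : Fin d → ℝ) :
    ∫ y, GK d N s c₂ ζ₁ (t - σ) (x - y) * GK d N s c₂ ζ₂ σ y ≤
      phaseMass (kernelExponent N s) (c₂ - c₁) * exp (-c₁ * phase (kernelExponent N s) t x) *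
        (2 ^ |(ζ₁ - ∑ j, (s j : ℝ)) / N| * t ^ ((ζ₁ - ∑ j, (s j : ℝ)) / N) * σ ^ (ζ₂ / N) +
          2 ^ |(ζ₂ - ∑ j, (s j : ℝ)) / N| * t ^ ((ζ₂ - ∑ j, (s j : ℝ)) / N) *
            (t - σ) ^ (ζ₁ / N)) := by
  obtain ⟨hσ₀, hσt⟩ := hσ
  have ht : 0 < t := hσ₀.trans hσt
  have htσ : 0 < t - σ := sub_pos.2 hσt
  set K := phaseMass (kernelExponent N s) (c₂ - c₁)
  set E := exp (-c₁ * phase (kernelExponent N s) t x)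
  set a₁ := (ζ₁ - ∑ j, (s j : ℝ)) / N
  set a₂ := (ζ₂ - ∑ j, (s j : ℝ)) / N
  have hKE : 0 ≤ K * E :=
    mul_nonneg (phaseMass_pos (kernelExponent_pos hN) (sub_pos.2 hc)).le (exp_pos _).le
  rcases le_or_gt σ (t / 2) with hhalf | hhalf
  · have hcomp : (t - σ) ^ a₁ ≤ 2 ^ |a₁| * t ^ a₁ :=
      rpow_le_two_rpow_abs_mul_rpow ht (by linarith) (sub_le_self t hσ₀.le)
    calc ∫ y, GK d N s c₂ ζ₁ (t - σ) (x - y) * GK d N s c₂ ζ₂ σ y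
        ≤ K * (t - σ) ^ a₁ * σ ^ (ζ₂ / N) * exp (-c₁ * phase (kernelExponent N s) (t - σ + σ) x) :=
          integral_GK_mul_GK_le hs hN hc₁ hc htσ hσ₀ x
      _ = K * E * ((t - σ) ^ a₁ * σ ^ (ζ₂ / N)) := by rw [sub_add_cancel]; ring
      _ ≤ K * E * (2 ^ |a₁| * t ^ a₁ * σ ^ (ζ₂ / N)) := by gcongr
      _ ≤ K * E * (2 ^ |a₁| * t ^ a₁ * σ ^ (ζ₂ / N) + 2 ^ |a₂| * t ^ a₂ * (t - σ) ^ (ζ₁ / N)) := by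
          gcongr
          exact le_add_of_nonneg_right (by positivity)
  · have hcomp : σ ^ a₂ ≤ 2 ^ |a₂| * t ^ a₂ :=
      rpow_le_two_rpow_abs_mul_rpow ht hhalf.le hσt.le
    have hswap : ∫ y, GK d N s c₂ ζ₁ (t - σ) (x - y) * GK d N s c₂ ζ₂ σ y =
        ∫ y, GK d N s c₂ ζ₂ σ (x - y) * GK d N s c₂ ζ₁ (t - σ) y := by
      rw [← integral_sub_left_eq_self
        (fun y => GK d N s c₂ ζ₂ σ (x - y) * GK d N s c₂ ζ₁ (t - σ) y) volume x]
      simp_rw [sub_sub_cancel, mul_comm]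
    calc ∫ y, GK d N s c₂ ζ₁ (t - σ) (x - y) * GK d N s c₂ ζ₂ σ y
        ≤ K * σ ^ a₂ * (t - σ) ^ (ζ₁ / N) *
            exp (-c₁ * phase (kernelExponent N s) (σ + (t - σ)) x) :=
          hswap ▸ integral_GK_mul_GK_le hs hN hc₁ hc hσ₀ htσ x
      _ = K * E * (σ ^ a₂ * (t - σ) ^ (ζ₁ / N)) := by rw [add_sub_cancel]; ring
      _ ≤ K * E * (2 ^ |a₂| * t ^ a₂ * (t - σ) ^ (ζ₁ / N)) := by gcongr
      _ ≤ K * E * (2 ^ |a₁| * t ^ a₁ * σ ^ (ζ₂ / N) + 2 ^ |a₂| * t ^ a₂ * (t - σ) ^ (ζ₁ / N)) := by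
          gcongr
          exact le_add_of_nonneg_left (by positivity)

end Kernel

/-- For `0 < c₁ < c₂` and `ζ₁, ζ₂ > −N` there is `C > 0` with
`∫_0^t ∫_{ℝ^d} G_{t−σ}^{(c₂,ζ₁)}(x−y) G_σ^{(c₂,ζ₂)}(y) dy dσ ≤ C G_t^{(c₁,ζ₁+ζ₂+N)}(x)`. -/
theorem stmt1 (d N : ℕ) (hd : 0 < d) (s : Fin d → ℕ)
    (hs : ∀ j, 0 < s j) (hN : ∀ j, s j < N)
    (c₁ c₂ ζ₁ ζ₂ : ℝ) (hc₁ : 0 < c₁) (hc : c₁ < c₂)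
    (hζ₁ : -(N : ℝ) < ζ₁) (hζ₂ : -(N : ℝ) < ζ₂) :
    ∃ C > (0:ℝ), ∀ t > (0:ℝ), ∀ x : Fin d → ℝ,
      (∫ σ in Set.Ioo (0:ℝ) t, ∫ y : Fin d → ℝ,
          GK d N s c₂ ζ₁ (t - σ) (x - y) * GK d N s c₂ ζ₂ σ y)
        ≤ C * GK d N s c₁ (ζ₁ + ζ₂ + N) t x := by
  have hN₀ : (0 : ℝ) < N := by exact_mod_cast (hs ⟨0, hd⟩).trans (hN ⟨0, hd⟩)
  have hβ₁ : -1 < ζ₁ / N := by rw [lt_div_iff₀ hN₀]; linarith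
  have hβ₂ : -1 < ζ₂ / N := by rw [lt_div_iff₀ hN₀]; linarith
  set S := ∑ j, (s j : ℝ)
  set K := phaseMass (kernelExponent N s) (c₂ - c₁)
  have hC : 0 < K * (2 ^ |(ζ₁ - S) / N| / (ζ₂ / N + 1) + 2 ^ |(ζ₂ - S) / N| / (ζ₁ / N + 1)) := by
    have := phaseMass_pos (kernelExponent_pos hN) (sub_pos.2 hc)
    have : 0 < ζ₁ / N + 1 := by linarith
    have : 0 < ζ₂ / N + 1 := by linarith
    positivity
  refine ⟨_, hC, fun t ht x => ?_⟩
  set E := exp (-c₁ * phase (kernelExponent N s) t x)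
  have hpow₁ : t ^ ((ζ₁ - S) / N) * t ^ (ζ₂ / N + 1) = t ^ ((ζ₁ + ζ₂ + N - S) / N) := by
    rw [← rpow_add ht]; congr 1; field_simp; ring
  have hpow₂ : t ^ ((ζ₂ - S) / N) * t ^ (ζ₁ / N + 1) = t ^ ((ζ₁ + ζ₂ + N - S) / N) := by
    rw [← rpow_add ht]; congr 1; field_simp; ring
  calc _ ≤ K * E * 2 ^ |(ζ₁ - S) / N| * t ^ ((ζ₁ - S) / N) * (t ^ (ζ₂ / N + 1) / (ζ₂ / N + 1)) +
          K * E * 2 ^ |(ζ₂ - S) / N| * t ^ ((ζ₂ - S) / N) * (t ^ (ζ₁ / N + 1) / (ζ₁ / N + 1)) := by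
        refine setIntegral_Ioo_le_of_le_rpow_add_rpow ht hβ₂ hβ₁ (fun σ hσ => ?_) (fun σ hσ => ?_)
        · exact integral_nonneg fun y =>
            mul_nonneg (GK_nonneg (sub_pos.2 hσ.2).le _) (GK_nonneg hσ.1.le _)
        · exact (integral_GK_mul_GK_le_of_mem_Ioo hs hN hc₁.le hc hσ x).trans_eq (by ring)
    _ = _ := by
        rw [GK_eq hs hN ht]
        linear_combination (K * E * 2 ^ |(ζ₁ - S) / N| / (ζ₂ / N + 1)) * hpow₁ +
          (K * E * 2 ^ |(ζ₂ - S) / N| / (ζ₁ / N + 1)) * hpow₂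
end

section
/- Let 𝔎 be a compact subset of (0,∞). For any M ∈ ℕ and k ∈ ℕ there exist constants C, c' > 0 such that for all λ, μ ∈ 𝔎, t > 0 and x ∈ ℝ: |∂_x^k Z_t^μ(x) − Σ_{n=0}^{M−1} ((μ−λ)^n / n!) · t^n · ∂_x^{2n+k} Z_t^λ(x)| ≤ C |μ−λ|^M · t^{(−k−1)/2} · exp(−c' x²/t). -/
/-!
With `r = (2λt)^{-1/2}` and `𝒢 u = exp (-u²/2)`, one has `Z_t^λ(x) = K r 𝒢(r x)` with
`K = e^{-ct}/√(2π)`, so `∂_x^n Z_t^λ(x) = K r^{n+1} 𝒢^{(n)}(r x)`. The three-term recurrence of the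
Hermite polynomials, `𝒢^{(n+2)}(u) = -u 𝒢^{(n+1)}(u) - (n+1) 𝒢^{(n)}(u)`, turns this into the heat
equation in the diffusivity: `∂_λ ∂_x^n Z^λ = t ∂_x^{n+2} Z^λ`. Hence the sum in the statement is the
Taylor polynomial of order `M` of `λ ↦ ∂_x^k Z_t^λ(x)`, and the mean value inequality bounds the
remainder by `|μ - λ|^M` times a bound for `t^M ∂_x^{2M+k} Z_t^ν(x)` on an interval `[a, b] ⊇ 𝔎`.
That bound follows from `|𝒢^{(n)}(u)| ≤ C e^{-u²/4}`, since a polynomial is `O(e^{u²/4})`.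
-/

open Real Polynomial
open scoped ContDiff

noncomputable def Zker (c lam t x : ℝ) : ℝ :=
  if 0 < t then
    Real.exp (-c * t) * (Real.sqrt (4 * Real.pi * lam * t))⁻¹ *
      Real.exp (-x ^ 2 / (4 * lam * t))
  else 0

namespace Polynomial

theorem derivative_hermite_succ (n : ℕ) :
    derivative (hermite (n + 1)) = (n + 1 : ℤ[X]) * hermite n := by
  induction n with
  | zero => simp
  | succ n ih =>
    rw [hermite_succ (n + 1), derivative_sub, derivative_mul, derivative_X, ih, hermite_succ n,
      derivative_mul]
    simp only [derivative_add, derivative_one, derivative_natCast]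
    push_cast
    ring

theorem hermite_add_two (n : ℕ) :
    hermite (n + 2) = X * hermite (n + 1) - (n + 1 : ℤ[X]) * hermite n := by
  rw [hermite_succ (n + 1), derivative_hermite_succ]

end Polynomial

local notation "𝒢" => fun y : ℝ => Real.exp (-(y ^ 2 / 2))

theorem iterate_deriv_gaussian_add_two (n : ℕ) (u : ℝ) :
    deriv^[n + 2] 𝒢 u = -(u * deriv^[n + 1] 𝒢 u) - (n + 1) * deriv^[n] 𝒢 u := by
  simp only [deriv_gaussian_eq_hermite_mul_gaussian, hermite_add_two, map_sub, map_mul, aeval_X,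
    map_add, map_natCast, map_one]
  ring

theorem hasDerivAt_iterate_deriv_gaussian (n : ℕ) (u : ℝ) :
    HasDerivAt (deriv^[n] 𝒢) (deriv^[n + 1] 𝒢 u) u := by
  have hG : ContDiff ℝ ∞ 𝒢 := by fun_prop
  rw [Function.iterate_succ_apply']
  exact ((hG.iterate_deriv n).differentiable (by simp) u).hasDerivAt

theorem abs_pow_mul_exp_neg_sq_div_four_le (i : ℕ) (u : ℝ) :
    |u| ^ i * exp (-(u ^ 2 / 4)) ≤ i.factorial * exp 1 := by
  have hpow : |u| ^ i ≤ i.factorial * exp |u| := by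
    have := pow_div_factorial_le_exp |u| (abs_nonneg u) i
    rwa [div_le_iff₀ (by positivity), mul_comm] at this
  have hexp : exp |u| * exp (-(u ^ 2 / 4)) ≤ exp 1 := by
    rw [← exp_add, exp_le_exp]
    nlinarith [sq_nonneg (|u| - 2), sq_abs u]
  calc |u| ^ i * exp (-(u ^ 2 / 4)) ≤ i.factorial * exp |u| * exp (-(u ^ 2 / 4)) := by gcongr
    _ ≤ i.factorial * exp 1 := by rw [mul_assoc]; gcongr

theorem Polynomial.exists_abs_eval_mul_exp_neg_sq_div_four_le (p : ℝ[X]) :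
    ∃ C, ∀ u, |p.eval u| * exp (-(u ^ 2 / 4)) ≤ C := by
  refine ⟨∑ i ∈ Finset.range (p.natDegree + 1), |p.coeff i| * (i.factorial * exp 1), fun u => ?_⟩
  calc |p.eval u| * exp (-(u ^ 2 / 4))
      ≤ (∑ i ∈ Finset.range (p.natDegree + 1), |p.coeff i| * |u| ^ i) * exp (-(u ^ 2 / 4)) := by
        gcongr
        rw [eval_eq_sum_range]
        refine (Finset.abs_sum_le_sum_abs _ _).trans_eq ?_
        simp only [abs_mul, abs_pow]
    _ = ∑ i ∈ Finset.range (p.natDegree + 1), |p.coeff i| * (|u| ^ i * exp (-(u ^ 2 / 4))) := by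
        rw [Finset.sum_mul]
        simp only [mul_assoc]
    _ ≤ _ := Finset.sum_le_sum fun i _ =>
        mul_le_mul_of_nonneg_left (abs_pow_mul_exp_neg_sq_div_four_le i u) (abs_nonneg _)

theorem exists_abs_iterate_deriv_gaussian_le (n : ℕ) :
    ∃ C > 0, ∀ u, |deriv^[n] 𝒢 u| ≤ C * exp (-(u ^ 2 / 4)) := by
  obtain ⟨C, hC⟩ := ((hermite n).map (Int.castRingHom ℝ)).exists_abs_eval_mul_exp_neg_sq_div_four_le
  refine ⟨max C 1, by positivity, fun u => ?_⟩
  have hsplit : exp (-(u ^ 2 / 2)) = exp (-(u ^ 2 / 4)) * exp (-(u ^ 2 / 4)) := by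
    rw [← exp_add]; ring_nf
  rw [deriv_gaussian_eq_hermite_mul_gaussian, hsplit, aeval_def, eval₂_eq_eval_map]
  simp only [abs_mul, abs_pow, abs_neg, abs_one, one_pow, one_mul, abs_exp, ← mul_assoc]
  gcongr
  exact (hC u).trans (le_max_left _ _)

section Taylor

variable {E : Type*} [NormedAddCommGroup E] [NormedSpace ℝ E]

theorem hasDerivAt_sum_range_pow_div_factorial_smul (v : ℕ → E) (a x : ℝ) (M : ℕ) :
    HasDerivAt (fun y => ∑ n ∈ Finset.range (M + 1), ((y - a) ^ n / n.factorial) • v n)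
      (∑ n ∈ Finset.range M, ((x - a) ^ n / n.factorial) • v (n + 1)) x := by
  induction M with
  | zero => simpa using hasDerivAt_const x (v 0)
  | succ M ih =>
    rw [Finset.sum_range_succ _ M]
    simp only [Finset.sum_range_succ _ (M + 1)]
    have hpow : HasDerivAt (fun y => (y - a) ^ (M + 1) / ((M + 1).factorial : ℝ))
        ((x - a) ^ M / M.factorial) x := by
      refine ((((hasDerivAt_id x).sub_const a).pow (M + 1)).div_const
        ((M + 1).factorial : ℝ)).congr_deriv ?_
      rw [Nat.factorial_succ]
      push_cast
      field_simp
      simp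
    exact ih.add (hpow.smul_const _)

theorem norm_sub_sum_range_pow_div_factorial_smul_le {s : Set ℝ} (hs : Convex ℝ s) {M : ℕ}
    {f : ℕ → ℝ → E} {B : ℝ} (hf : ∀ n < M, ∀ y ∈ s, HasDerivAt (f n) (f (n + 1) y) y)
    (hB : ∀ y ∈ s, ‖f M y‖ ≤ B) {a b : ℝ} (ha : a ∈ s) (hb : b ∈ s) :
    ‖f 0 b - ∑ n ∈ Finset.range M, ((b - a) ^ n / n.factorial) • f n a‖ ≤ B * |b - a| ^ M := by
  induction M generalizing f b with
  | zero => simpa using hB b hb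
  | succ M ih =>
    have hab : Set.uIcc a b ⊆ s := hs.ordConnected.uIcc_subset ha hb
    set g := fun y => f 0 y - ∑ n ∈ Finset.range (M + 1), ((y - a) ^ n / n.factorial) • f n a
    have hg : ∀ y ∈ s, HasDerivAt g
        (f 1 y - ∑ n ∈ Finset.range M, ((y - a) ^ n / n.factorial) • f (n + 1) a) y := fun y hy =>
      (hf 0 M.succ_pos y hy).sub (hasDerivAt_sum_range_pow_div_factorial_smul _ a y M)
    have hg' : ∀ y ∈ Set.uIcc a b,
        ‖f 1 y - ∑ n ∈ Finset.range M, ((y - a) ^ n / n.factorial) • f (n + 1) a‖ ≤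
          B * |b - a| ^ M := fun y hy =>
      (ih (fun n hn => hf (n + 1) (by omega)) hB (hab hy)).trans <| by
        have hB0 : 0 ≤ B := (norm_nonneg _).trans (hB a ha)
        exact mul_le_mul_of_nonneg_left
          (pow_le_pow_left₀ (abs_nonneg _) (Set.abs_sub_left_of_mem_uIcc hy) M) hB0
    have hga : g a = 0 := by simp [g, Finset.sum_range_succ']
    have := (convex_uIcc a b).norm_image_sub_le_of_norm_hasDerivWithin_le
      (fun y hy => (hg y (hab hy)).hasDerivWithinAt) hg' Set.left_mem_uIcc Set.right_mem_uIcc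
    rwa [hga, sub_zero, Real.norm_eq_abs, mul_assoc, ← pow_succ] at this

end Taylor

section HeatKernel

variable {c lam t : ℝ}

theorem Zker_eq_gaussian (ht : 0 < t) (hlam : 0 < lam) :
    (fun w => Zker c lam t w) = fun w =>
      exp (-c * t) / √(2 * π) * (√(2 * lam * t))⁻¹ * 𝒢 ((√(2 * lam * t))⁻¹ * w) := by
  funext w
  have hsqrt : √(4 * π * lam * t) = √(2 * π) * √(2 * lam * t) := by
    rw [← sqrt_mul (by positivity)]
    ring_nf
  have hexp : -((√(2 * lam * t))⁻¹ * w) ^ 2 / 2 = -w ^ 2 / (4 * lam * t) := by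
    rw [mul_pow, inv_pow, sq_sqrt (by positivity)]
    field_simp
    ring
  simp only [Zker, if_pos ht, hsqrt, neg_div, ← hexp]
  ring

theorem iteratedDeriv_Zker (ht : 0 < t) (hlam : 0 < lam) (n : ℕ) (x : ℝ) :
    iteratedDeriv n (fun w => Zker c lam t w) x =
      exp (-c * t) / √(2 * π) * ((√(2 * lam * t))⁻¹) ^ (n + 1) *
        deriv^[n] 𝒢 ((√(2 * lam * t))⁻¹ * x) := by
  rw [Zker_eq_gaussian ht hlam, iteratedDeriv_const_mul_field,
    iteratedDeriv_comp_const_mul (f := 𝒢) (by fun_prop), iteratedDeriv_eq_iterate]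
  ring

theorem hasDerivAt_inv_sqrt_two_mul_mul (ht : 0 < t) (hlam : 0 < lam) :
    HasDerivAt (fun l => (√(2 * l * t))⁻¹) (-t * ((√(2 * lam * t))⁻¹) ^ 3) lam := by
  have hpos : 0 < √(2 * lam * t) := sqrt_pos.2 (by positivity)
  have hlin : HasDerivAt (fun l : ℝ => 2 * l * t) (2 * t) lam := by
    simpa using ((hasDerivAt_id lam).const_mul 2).mul_const t
  refine (((hasDerivAt_sqrt (by positivity)).comp lam hlin).inv hpos.ne').congr_deriv ?_
  simp only [Function.comp_apply]
  field_simp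

theorem hasDerivAt_iteratedDeriv_Zker_diffusivity (ht : 0 < t) (hlam : 0 < lam) (n : ℕ) (x : ℝ) :
    HasDerivAt (fun l => iteratedDeriv n (fun w => Zker c l t w) x)
      (t * iteratedDeriv (n + 2) (fun w => Zker c lam t w) x) lam := by
  set r := fun l : ℝ => (√(2 * l * t))⁻¹
  have hr := hasDerivAt_inv_sqrt_two_mul_mul ht hlam
  have hφ := (hasDerivAt_iterate_deriv_gaussian n (r lam * x)).comp lam (hr.mul_const x)
  have hF := ((hr.pow (n + 1)).mul hφ).const_mul (exp (-c * t) / √(2 * π))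
  have heq : (fun l => iteratedDeriv n (fun w => Zker c l t w) x) =ᶠ[nhds lam]
      fun l => exp (-c * t) / √(2 * π) * (r l ^ (n + 1) * deriv^[n] 𝒢 (r l * x)) := by
    filter_upwards [Ioi_mem_nhds hlam] with l hl
    rw [iteratedDeriv_Zker ht hl, mul_assoc]
  refine (hF.congr_of_eventuallyEq heq).congr_deriv ?_
  rw [iteratedDeriv_Zker ht hlam, iterate_deriv_gaussian_add_two]
  simp only [Function.comp_apply, Pi.pow_apply, Nat.add_sub_cancel, r]
  push_cast
  ring

theorem abs_iteratedDeriv_Zker_le (hc : 0 ≤ c) (ht : 0 < t) (hlam : 0 < lam) {n : ℕ} {C : ℝ}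
    (hC : ∀ u, |deriv^[n] 𝒢 u| ≤ C * exp (-(u ^ 2 / 4))) (x : ℝ) :
    |iteratedDeriv n (fun w => Zker c lam t w) x| ≤
      C * ((√(2 * lam * t))⁻¹) ^ (n + 1) * exp (-(x ^ 2 / (8 * lam * t))) := by
  have hK : exp (-c * t) / √(2 * π) ≤ 1 :=
    div_le_one_of_le₀ ((exp_le_one_iff.mpr (by nlinarith)).trans
      (one_le_sqrt.mpr (by nlinarith [pi_gt_three]))) (sqrt_nonneg _)
  have hu : ((√(2 * lam * t))⁻¹ * x) ^ 2 / 4 = x ^ 2 / (8 * lam * t) := by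
    rw [mul_pow, inv_pow, sq_sqrt (by positivity)]
    field_simp
    ring
  rw [iteratedDeriv_Zker ht hlam, abs_mul, abs_mul, abs_of_pos (by positivity),
    abs_of_pos (by positivity), ← hu]
  calc exp (-c * t) / √(2 * π) * (√(2 * lam * t))⁻¹ ^ (n + 1) *
        |deriv^[n] 𝒢 ((√(2 * lam * t))⁻¹ * x)|
      ≤ 1 * (√(2 * lam * t))⁻¹ ^ (n + 1) *
        (C * exp (-(((√(2 * lam * t))⁻¹ * x) ^ 2 / 4))) := by
        gcongr
        exact hC _
    _ = _ := by ring

theorem pow_mul_inv_sqrt_pow_eq_rpow (ht : 0 < t) (j k : ℕ) :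
    t ^ j * ((√t)⁻¹) ^ (2 * j + k + 1) = t ^ ((-(k : ℝ) - 1) / 2) := by
  rw [sqrt_eq_rpow, ← rpow_neg ht.le, ← rpow_natCast, ← rpow_natCast, ← rpow_mul ht.le,
    ← rpow_add ht]
  congr 1
  push_cast
  ring

theorem abs_pow_mul_iteratedDeriv_Zker_le (hc : 0 ≤ c) (ht : 0 < t) {a b : ℝ} (ha : 0 < a)
    (hlam : lam ∈ Set.Icc a b) {j k : ℕ} {C : ℝ}
    (hC : ∀ u, |deriv^[2 * j + k] 𝒢 u| ≤ C * exp (-(u ^ 2 / 4))) (x : ℝ) :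
    |t ^ j * iteratedDeriv (2 * j + k) (fun w => Zker c lam t w) x| ≤
      C * ((√(2 * a))⁻¹) ^ (2 * j + k + 1) * t ^ ((-(k : ℝ) - 1) / 2) *
        exp (-(1 / (8 * b)) * x ^ 2 / t) := by
  have hlam0 : 0 < lam := ha.trans_le hlam.1
  have hC0 : 0 ≤ C := by simpa using (abs_nonneg _).trans (hC 0)
  have hscale : t ^ j * ((√(2 * lam * t))⁻¹) ^ (2 * j + k + 1) =
      ((√(2 * lam))⁻¹) ^ (2 * j + k + 1) * t ^ ((-(k : ℝ) - 1) / 2) := by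
    rw [sqrt_mul (by positivity), mul_inv, mul_pow, ← pow_mul_inv_sqrt_pow_eq_rpow ht j k]
    ring
  have hsqrt : (√(2 * lam))⁻¹ ≤ (√(2 * a))⁻¹ :=
    inv_anti₀ (sqrt_pos.2 (by positivity)) (sqrt_le_sqrt (by linarith [hlam.1]))
  have hexp : exp (-(x ^ 2 / (8 * lam * t))) ≤ exp (-(1 / (8 * b)) * x ^ 2 / t) := by
    have hb : 0 < b := hlam0.trans_le hlam.2
    have hdiv : x ^ 2 / (8 * b * t) ≤ x ^ 2 / (8 * lam * t) :=
      div_le_div_of_nonneg_left (sq_nonneg x) (by positivity) (by nlinarith [hlam.2])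
    have hrw : -(1 / (8 * b)) * x ^ 2 / t = -(x ^ 2 / (8 * b * t)) := by field_simp
    rw [exp_le_exp, hrw]
    linarith
  rw [abs_mul, abs_of_pos (by positivity)]
  calc t ^ j * |iteratedDeriv (2 * j + k) (fun w => Zker c lam t w) x|
      ≤ t ^ j * (C * ((√(2 * lam * t))⁻¹) ^ (2 * j + k + 1) *
          exp (-(x ^ 2 / (8 * lam * t)))) := by
        gcongr
        exact abs_iteratedDeriv_Zker_le hc ht hlam0 hC x
    _ = C * (t ^ j * ((√(2 * lam * t))⁻¹) ^ (2 * j + k + 1)) *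
          exp (-(x ^ 2 / (8 * lam * t))) := by ring
    _ = C * ((√(2 * lam))⁻¹) ^ (2 * j + k + 1) * t ^ ((-(k : ℝ) - 1) / 2) *
          exp (-(x ^ 2 / (8 * lam * t))) := by rw [hscale]; ring
    _ ≤ _ := by gcongr

end HeatKernel

theorem IsCompact.exists_subset_Icc_of_subset_Ioi {K : Set ℝ} (hK : IsCompact K)
    (hpos : K ⊆ Set.Ioi 0) : ∃ a b, 0 < a ∧ 0 < b ∧ K ⊆ Set.Icc a b := by
  rcases K.eq_empty_or_nonempty with rfl | hne
  · exact ⟨1, 1, one_pos, one_pos, Set.empty_subset _⟩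
  exact ⟨sInf K, sSup K, hpos (hK.sInf_mem hne), hpos (hK.sSup_mem hne),
    fun z hz => ⟨csInf_le hK.bddBelow hz, le_csSup hK.bddAbove hz⟩⟩

/-- Taylor expansion of `Z^μ` around `Z^λ` in the diffusivity: for a compact set
`𝔎 ⊂ (0,∞)` and any `M, k ∈ ℕ` there are `C, c' > 0` with
`|∂_x^k Z_t^μ(x) − Σ_{n<M} ((μ−λ)^n/n!) tⁿ ∂_x^{2n+k} Z_t^λ(x)|
  ≤ C |μ−λ|^M t^{(−k−1)/2} exp(−c' x²/t)` for all `λ, μ ∈ 𝔎`, `t > 0`, `x ∈ ℝ`. -/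
theorem stmt10 (c : ℝ) (hc : 0 ≤ c)
    (𝔎 : Set ℝ) (h𝔎 : IsCompact 𝔎) (h𝔎' : 𝔎 ⊆ Set.Ioi 0)
    (M k : ℕ) :
    ∃ C > (0:ℝ), ∃ c' > (0:ℝ), ∀ lam ∈ 𝔎, ∀ mu ∈ 𝔎, ∀ t > (0:ℝ), ∀ x : ℝ,
      |iteratedDeriv k (fun w => Zker c mu t w) x -
          ∑ n ∈ Finset.range M, ((mu - lam) ^ n / (n.factorial : ℝ)) * t ^ n *
            iteratedDeriv (2 * n + k) (fun w => Zker c lam t w) x| ≤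
        C * |mu - lam| ^ M * t ^ ((-(k : ℝ) - 1) / 2) * Real.exp (-c' * x ^ 2 / t) := by
  obtain ⟨a, b, ha, hb, hsub⟩ := h𝔎.exists_subset_Icc_of_subset_Ioi h𝔎'
  obtain ⟨C, hC, hgauss⟩ := exists_abs_iterate_deriv_gaussian_le (2 * M + k)
  refine ⟨C * ((√(2 * a))⁻¹) ^ (2 * M + k + 1), by positivity, 1 / (8 * b), by positivity, ?_⟩
  intro lam hlam mu hmu t ht x
  have hderiv : ∀ n, ∀ l ∈ Set.Icc a b,
      HasDerivAt (fun l => t ^ n * iteratedDeriv (2 * n + k) (fun w => Zker c l t w) x)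
        (t ^ (n + 1) * iteratedDeriv (2 * (n + 1) + k) (fun w => Zker c l t w) x) l := by
    intro n l hl
    rw [show 2 * (n + 1) + k = 2 * n + k + 2 by ring, pow_succ, mul_assoc]
    exact (hasDerivAt_iteratedDeriv_Zker_diffusivity ht (ha.trans_le hl.1) _ x).const_mul _
  have htaylor := norm_sub_sum_range_pow_div_factorial_smul_le (convex_Icc a b)
    (fun n _ => hderiv n) (fun l hl => abs_pow_mul_iteratedDeriv_Zker_le hc ht ha hl hgauss x)
    (hsub hlam) (hsub hmu)
  simp only [pow_zero, one_mul, mul_zero, zero_add, smul_eq_mul, Real.norm_eq_abs,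
    ← mul_assoc] at htaylor
  exact htaylor.trans_eq (by ring)
end
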